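/- Let P ∈ ℝ^{T×K} have full column rank and P† its Moore–Penrose pseudo-inverse. Let v, v̂ ∈ ℝ^K be unit vectors, and set s̃ = Pv, ŝ = Pv̂. Then if s̃/‖s̃‖ and ŝ/‖ŝ‖ are the unit-normalized time-domain signals, (v̂ᵀv)² ≤ g(P†) + ((ŝᵀs̃)/(‖ŝ‖‖s̃‖))², where g(A) = ‖AᵀA − I‖² + 2‖AᵀA − I‖. -/

import Mathlib

open scoped RealInnerProductSpace Matrix

/-- Operator norm of a square real matrix, induced by the Euclidean norm. -/
noncomputable def matNorm {d : ℕ} (M : Matrix (Fin d) (Fin d) ℝ) : ℝ :=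
  ‖LinearMap.toContinuousLinearMap (Matrix.toEuclideanLin M)‖

/-- `g(A) = ‖AᵀA − I‖² + 2‖AᵀA − I‖`. -/
noncomputable def gMat {n d : ℕ} (A : Matrix (Fin n) (Fin d) ℝ) : ℝ :=
  matNorm (Aᵀ * A - 1) ^ 2 + 2 * matNorm (Aᵀ * A - 1)

/-- The SI-SDR ratio `R(y, ŷ) = ‖αy‖²/‖αy − ŷ‖²` with `α = ⟪ŷ, y⟫/‖y‖²`. -/
noncomputable def sisdrR {d : ℕ} (y yh : EuclideanSpace ℝ (Fin d)) : ℝ :=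
  ‖(⟪yh, y⟫ / ‖y‖ ^ 2) • y‖ ^ 2 / ‖(⟪yh, y⟫ / ‖y‖ ^ 2) • y - yh‖ ^ 2

/-!
If `‖AᵀA - I‖ ≤ ε`, then `A` changes inner products by at most `ε ‖u‖ ‖w‖`. Split a unit
vector `y` as `c x + z` with `z ⟂ x`, `‖z‖ = s` and `c² + s² = 1`. Replacing `Ay` by `Az`
leaves the Gram determinant of the pair `(Ax, Ay)` unchanged; that of `(Ax, Az)` is at least
`(1 - 2ε) s²`, and `|⟪Ax, Ay⟫| ≤ |c| (1 + ε) + ε s`. A polynomial inequality in `c, s, ε` then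
bounds the squared cosine of the angle between `Ax` and `Ay` by `c² + 2ε + ε²`. With `A = P†`,
which maps `s̃` and `ŝ` back to the unit vectors `v` and `v̂`, this is the theorem.
-/

section DistortionInequalities

variable {ε : ℝ}

lemma distortion_poly_le (hε : 0 ≤ ε) {σ : ℝ} (hσt : 2 * ε + ε ^ 2 ≤ σ) (hσ : σ ≤ 1) :
    (σ - (2 * ε + ε ^ 2)) * ((1 - σ) * (1 + ε) ^ 2 + ε * (1 + ε) + σ * ε ^ 2)
      ≤ (1 - σ + (2 * ε + ε ^ 2)) * (σ * (1 - 2 * ε)) := by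
  have ht := sub_nonneg.2 hσt
  have h1 := sub_nonneg.2 hσ
  nlinarith [mul_nonneg (mul_nonneg hε h1) ht, mul_nonneg (mul_nonneg hε hε) ht,
    mul_nonneg (mul_nonneg hε hε) h1, mul_nonneg (mul_nonneg hε ht) ht,
    mul_nonneg (mul_nonneg hε h1) h1, mul_nonneg (mul_nonneg hε hε) hε]

lemma distortion_sq_le (hε : 0 ≤ ε) {a s : ℝ} (hcs : a ^ 2 + s ^ 2 = 1)
    (hst : 2 * ε + ε ^ 2 ≤ s ^ 2) :
    (s ^ 2 - (2 * ε + ε ^ 2)) * (a * (1 + ε) + s * ε) ^ 2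
      ≤ (a ^ 2 + (2 * ε + ε ^ 2)) * (s ^ 2 * (1 - 2 * ε)) := by
  -- `2as ≤ a² + s² = 1` bounds the cross term
  have hcross :
      (a * (1 + ε) + s * ε) ^ 2 ≤ (1 - s ^ 2) * (1 + ε) ^ 2 + ε * (1 + ε) + s ^ 2 * ε ^ 2 := by
    nlinarith [mul_nonneg hε (mul_nonneg (by linarith : (0 : ℝ) ≤ 1 + ε) (sq_nonneg (a - s)))]
  calc (s ^ 2 - (2 * ε + ε ^ 2)) * (a * (1 + ε) + s * ε) ^ 2
      ≤ (s ^ 2 - (2 * ε + ε ^ 2)) *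
          ((1 - s ^ 2) * (1 + ε) ^ 2 + ε * (1 + ε) + s ^ 2 * ε ^ 2) :=
        mul_le_mul_of_nonneg_left hcross (sub_nonneg.2 hst)
    _ ≤ (1 - s ^ 2 + (2 * ε + ε ^ 2)) * (s ^ 2 * (1 - 2 * ε)) :=
        distortion_poly_le hε hst (by nlinarith)
    _ = (a ^ 2 + (2 * ε + ε ^ 2)) * (s ^ 2 * (1 - 2 * ε)) := by rw [← hcs]; ring

lemma sq_le_of_perturbed_gram (hε : 0 ≤ ε) {a b q c s : ℝ} (hcs : c ^ 2 + s ^ 2 = 1)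
    (ha : |a - 1| ≤ ε) (hq : |q| ≤ ε * s) (hb : |b - s ^ 2| ≤ ε * s ^ 2)
    (hgram : q ^ 2 ≤ a * b) :
    (c * a + q) ^ 2 ≤ (c ^ 2 + (2 * ε + ε ^ 2)) * (a * (c ^ 2 * a + 2 * c * q + b)) := by
  have hsplit : a * (c ^ 2 * a + 2 * c * q + b) = (c * a + q) ^ 2 + (a * b - q ^ 2) := by ring
  rw [hsplit]
  obtain ⟨ha₁, ha₂⟩ := abs_le.1 ha
  obtain ⟨hb₁, -⟩ := abs_le.1 hb
  rcases le_or_gt (s ^ 2) (2 * ε + ε ^ 2) with hsmall | hlarge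
  · -- here `c² + 2ε + ε² ≥ 1`
    nlinarith [mul_nonneg (by nlinarith : (0 : ℝ) ≤ c ^ 2 + (2 * ε + ε ^ 2)) (sub_nonneg.2 hgram)]
  · have hm : |c * a + q| ≤ |c| * (1 + ε) + s * ε := by
      calc |c * a + q| ≤ |c| * |a| + |q| := by rw [← abs_mul]; exact abs_add_le _ _
        _ ≤ |c| * (1 + ε) + s * ε := by
          gcongr
          · exact abs_le.2 ⟨by linarith, by linarith⟩
          · linarith
    have hdet : s ^ 2 * (1 - 2 * ε) ≤ a * b - q ^ 2 := by
      have hq2 : q ^ 2 ≤ (ε * s) ^ 2 := sq_le_sq' (abs_le.1 hq).1 (abs_le.1 hq).2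
      have hε₁ : ε ≤ 1 := by nlinarith
      have hb' : (1 - ε) * s ^ 2 ≤ b := by linarith
      nlinarith [mul_le_mul (by linarith : 1 - ε ≤ a) hb' (by nlinarith) (by linarith)]
    have hm2 : (c * a + q) ^ 2 ≤ (|c| * (1 + ε) + s * ε) ^ 2 :=
      sq_le_sq' (abs_le.1 hm).1 (abs_le.1 hm).2
    have hpoly := distortion_sq_le hε (a := |c|) (s := s) (by rwa [sq_abs]) hlarge.le
    rw [sq_abs] at hpoly
    nlinarith [mul_le_mul_of_nonneg_left hm2 (sub_nonneg.2 hlarge.le),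
      mul_le_mul_of_nonneg_left hdet (by positivity : (0 : ℝ) ≤ c ^ 2 + (2 * ε + ε ^ 2))]

end DistortionInequalities

section InnerDistortion

variable {E F : Type*} [NormedAddCommGroup E] [InnerProductSpace ℝ E]
  [NormedAddCommGroup F] [InnerProductSpace ℝ F] (L : E →ₗ[ℝ] F) {ε : ℝ}

theorem inner_map_sq_le_of_norm_eq_one (hε : 0 ≤ ε)
    (hL : ∀ u w, |⟪L u, L w⟫ - ⟪u, w⟫| ≤ ε * (‖u‖ * ‖w‖)) {x y : E} (hx : ‖x‖ = 1)
    (hy : ‖y‖ = 1) :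
    ⟪L x, L y⟫ ^ 2 ≤ (⟪x, y⟫ ^ 2 + (2 * ε + ε ^ 2)) * (‖L x‖ ^ 2 * ‖L y‖ ^ 2) := by
  set c := ⟪x, y⟫
  set z := y - c • x
  have hyz : y = c • x + z := by simp [z]
  have hxz : ⟪x, z⟫ = 0 := by
    simp [z, inner_sub_right, real_inner_smul_right, hx, c]
  have hcz : c ^ 2 + ‖z‖ ^ 2 = 1 := by
    have h := congrArg (‖·‖ ^ 2) hyz
    rw [norm_add_sq_real, real_inner_smul_left, hxz, norm_smul, mul_pow, hx, hy,
      Real.norm_eq_abs, sq_abs] at h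
    linarith
  have ha : |‖L x‖ ^ 2 - 1| ≤ ε := by
    simpa [real_inner_self_eq_norm_sq, hx] using hL x x
  have hq : |⟪L x, L z⟫| ≤ ε * ‖z‖ := by
    simpa [hxz, hx] using hL x z
  have hb : |‖L z‖ ^ 2 - ‖z‖ ^ 2| ≤ ε * ‖z‖ ^ 2 := by
    simpa [real_inner_self_eq_norm_sq, sq] using hL z z
  have hgram : ⟪L x, L z⟫ ^ 2 ≤ ‖L x‖ ^ 2 * ‖L z‖ ^ 2 := by
    simpa [sq, real_inner_self_eq_norm_sq] using real_inner_mul_inner_self_le (L x) (L z)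
  have hinner : ⟪L x, L y⟫ = c * ‖L x‖ ^ 2 + ⟪L x, L z⟫ := by
    rw [hyz, map_add, map_smul, inner_add_right, real_inner_smul_right, real_inner_self_eq_norm_sq]
  have hnorm : ‖L y‖ ^ 2 = c ^ 2 * ‖L x‖ ^ 2 + 2 * c * ⟪L x, L z⟫ + ‖L z‖ ^ 2 := by
    rw [hyz, map_add, map_smul, norm_add_sq_real, norm_smul, real_inner_smul_left, mul_pow,
      Real.norm_eq_abs, sq_abs]
    ring
  rw [hinner, hnorm]
  exact sq_le_of_perturbed_gram hε (by linarith) ha hq hb hgram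

theorem inner_map_sq_le (hε : 0 ≤ ε)
    (hL : ∀ u w, |⟪L u, L w⟫ - ⟪u, w⟫| ≤ ε * (‖u‖ * ‖w‖)) (x y : E) :
    ⟪L x, L y⟫ ^ 2 ≤
      ((⟪x, y⟫ / (‖x‖ * ‖y‖)) ^ 2 + (2 * ε + ε ^ 2)) * (‖L x‖ ^ 2 * ‖L y‖ ^ 2) := by
  rcases eq_or_ne x 0 with rfl | hx
  · simp
  rcases eq_or_ne y 0 with rfl | hy
  · simp
  have hunit : ∀ w : E, w ≠ 0 → ‖‖w‖⁻¹ • w‖ = 1 := fun w hw => by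
    rw [norm_smul, norm_inv, norm_norm, inv_mul_cancel₀ (norm_ne_zero_iff.2 hw)]
  have h := inner_map_sq_le_of_norm_eq_one L hε hL (hunit x hx) (hunit y hy)
  simp only [map_smul, real_inner_smul_left, real_inner_smul_right, norm_smul, norm_inv,
    norm_norm] at h
  have key : ⟪L x, L y⟫ ^ 2 / (‖x‖ * ‖y‖) ^ 2 ≤
      ((⟪x, y⟫ / (‖x‖ * ‖y‖)) ^ 2 + (2 * ε + ε ^ 2)) * (‖L x‖ ^ 2 * ‖L y‖ ^ 2) /
        (‖x‖ * ‖y‖) ^ 2 := by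
    convert h using 1
    · field_simp
    · field_simp
  rwa [div_le_div_iff_of_pos_right (by positivity)] at key

end InnerDistortion

namespace Matrix

variable {m n : Type*} [Fintype m] [DecidableEq m] [Fintype n] [DecidableEq n]

theorem inner_toEuclideanLin_transpose_mul_self_sub_one (A : Matrix m n ℝ)
    (u w : EuclideanSpace ℝ n) :
    ⟪toEuclideanLin (Aᵀ * A - 1) u, w⟫ = ⟪toEuclideanLin A u, toEuclideanLin A w⟫ - ⟪u, w⟫ := by
  rw [← conjTranspose_eq_transpose_of_trivial, map_sub, toLpLin_mul_same, toLpLin_one,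
    LinearMap.sub_apply, LinearMap.comp_apply, toEuclideanLin_conjTranspose_eq_adjoint,
    inner_sub_left, LinearMap.adjoint_inner_left, LinearMap.id_apply]

theorem toEuclideanLin_pinv_apply (P : Matrix m n ℝ) (hP : IsUnit (Pᵀ * P))
    (u : EuclideanSpace ℝ n) :
    toEuclideanLin ((Pᵀ * P)⁻¹ * Pᵀ) (toEuclideanLin P u) = u := by
  have hdet : IsUnit (Pᵀ * P).det := (isUnit_iff_isUnit_det _).1 hP
  rw [← LinearMap.comp_apply, ← toLpLin_mul_same, Matrix.mul_assoc, nonsing_inv_mul _ hdet,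
    toLpLin_one, LinearMap.id_apply]

end Matrix

theorem matNorm_nonneg {d : ℕ} (M : Matrix (Fin d) (Fin d) ℝ) : 0 ≤ matNorm M := norm_nonneg _

theorem abs_inner_toEuclideanLin_sub_le {n d : ℕ} (A : Matrix (Fin n) (Fin d) ℝ)
    (u w : EuclideanSpace ℝ (Fin d)) :
    |⟪Matrix.toEuclideanLin A u, Matrix.toEuclideanLin A w⟫ - ⟪u, w⟫|
      ≤ matNorm (Aᵀ * A - 1) * (‖u‖ * ‖w‖) := by
  rw [← Matrix.inner_toEuclideanLin_transpose_mul_self_sub_one, ← mul_assoc]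
  calc _ ≤ ‖Matrix.toEuclideanLin (Aᵀ * A - 1) u‖ * ‖w‖ := abs_real_inner_le_norm _ _
    _ ≤ _ := by
      gcongr
      exact (LinearMap.toContinuousLinearMap (Matrix.toEuclideanLin (Aᵀ * A - 1))).le_opNorm u

theorem stmt8 {T K : ℕ} (P : Matrix (Fin T) (Fin K) ℝ)
    (hfull : IsUnit (Pᵀ * P)) (v vh : EuclideanSpace ℝ (Fin K))
    (hv : ‖v‖ = 1) (hvh : ‖vh‖ = 1) :
    let Pdag : Matrix (Fin K) (Fin T) ℝ := (Pᵀ * P)⁻¹ * Pᵀ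
    let st : EuclideanSpace ℝ (Fin T) := Matrix.toEuclideanLin P v
    let sh : EuclideanSpace ℝ (Fin T) := Matrix.toEuclideanLin P vh
    ⟪vh, v⟫ ^ 2 ≤ gMat Pdag + (⟪sh, st⟫ / (‖sh‖ * ‖st‖)) ^ 2 := by
  intro Pdag st sh
  have hst : Matrix.toEuclideanLin Pdag st = v := Matrix.toEuclideanLin_pinv_apply P hfull v
  have hsh : Matrix.toEuclideanLin Pdag sh = vh := Matrix.toEuclideanLin_pinv_apply P hfull vh
  have h := inner_map_sq_le (Matrix.toEuclideanLin Pdag) (matNorm_nonneg _)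
    (abs_inner_toEuclideanLin_sub_le Pdag) sh st
  rw [hsh, hst, hvh, hv, one_pow, mul_one, mul_one] at h
  rw [gMat]
  linarith
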